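/- Let n ≥ 1 and let U ⊆ [0,∞)^n be a set that is closed in ℝ^n. Then E(Min_≺(U)) ∩ U = ∅; that is, no element of U lies in the stable zone determined by the boundary Min_≺(U). -/

import Mathlib

/-- Refinement containment: `ε ⪯ ε′` iff `|ε i| ≤ |ε′ i|` for every coordinate. -/
def refCont {ι : Type*} (ε ε' : ι → ℝ) : Prop := ∀ i, |ε i| ≤ |ε' i|

/-- Strict refinement containment: `ε ≺ ε′` iff `ε ⪯ ε′` and `|ε i| < |ε′ i|` for some `i`. -/
def refSCont {ι : Type*} (ε ε' : ι → ℝ) : Prop := refCont ε ε' ∧ ∃ i, |ε i| < |ε' i|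

/-- `Min_≺(R)`: the elements of `R` that strictly contain no element of `R`. -/
def minSet {ι : Type*} (R : Set (ι → ℝ)) : Set (ι → ℝ) :=
  {ε ∈ R | ¬ ∃ ε' ∈ R, refSCont ε' ε}

/-- `E(R)`: the set of refinements containing no refinement of `R`. -/
def eSet {ι : Type*} (R : Set (ι → ℝ)) : Set (ι → ℝ) :=
  {ε | ¬ ∃ ε' ∈ R, refCont ε' ε}

/-
Among the elements of `U` contained in `u`, which form a compact set when `U` is closed, one
minimising `∑ i, |ε i|` exists; since `≺` strictly decreases this sum, the minimiser lies in
`Min_≺(U)`, and it is contained in `u`, so `u ∉ E(Min_≺(U))`.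
-/

section RefinementContainment

variable {ι : Type*}

theorem refCont.trans {ε ε' ε'' : ι → ℝ} (h : refCont ε ε') (h' : refCont ε' ε'') :
    refCont ε ε'' :=
  fun i => (h i).trans (h' i)

theorem refSCont.sum_abs_lt [Fintype ι] {ε ε' : ι → ℝ} (h : refSCont ε ε') :
    ∑ i, |ε i| < ∑ i, |ε' i| :=
  let ⟨hle, i, hlt⟩ := h
  Finset.sum_lt_sum (fun j _ => hle j) ⟨i, Finset.mem_univ i, hlt⟩

theorem isClosed_setOf_refCont (u : ι → ℝ) : IsClosed {ε : ι → ℝ | refCont ε u} := by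
  simp only [refCont, Set.ofPred_forall]
  exact isClosed_iInter fun i => isClosed_le (continuous_apply i).abs continuous_const

theorem setOf_refCont_subset_Icc (u : ι → ℝ) :
    {ε : ι → ℝ | refCont ε u} ⊆ Set.Icc (-|u|) |u| :=
  fun _ hε => ⟨fun i => neg_le_of_abs_le (hε i), fun i => le_of_abs_le (hε i)⟩

theorem IsClosed.isCompact_inter_setOf_refCont {U : Set (ι → ℝ)} (hU : IsClosed U) (u : ι → ℝ) :
    IsCompact (U ∩ {ε | refCont ε u}) :=
  isCompact_Icc.of_isClosed_subset (hU.inter (isClosed_setOf_refCont u))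
    (Set.inter_subset_right.trans (setOf_refCont_subset_Icc u))

theorem IsClosed.exists_mem_minSet_refCont [Fintype ι] {U : Set (ι → ℝ)} (hU : IsClosed U)
    {u : ι → ℝ} (hu : u ∈ U) : ∃ ε ∈ minSet U, refCont ε u := by
  obtain ⟨ε, ⟨hεU, hεu⟩, hmin⟩ :=
    (hU.isCompact_inter_setOf_refCont u).exists_isMinOn ⟨u, hu, fun i => le_rfl⟩
      (continuous_finsetSum Finset.univ fun i _ => (continuous_apply i).abs).continuousOn
  refine ⟨ε, ⟨hεU, ?_⟩, hεu⟩
  rintro ⟨ε', hε'U, hε'ε⟩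
  exact (hmin ⟨hε'U, hε'ε.1.trans hεu⟩).not_gt hε'ε.sum_abs_lt

end RefinementContainment

theorem eSet_minSet_inter_empty_general {n : ℕ} (U : Set (Fin n → ℝ))
    (hclosed : IsClosed U) :
    eSet (minSet U) ∩ U = ∅ :=
  Set.eq_empty_of_forall_notMem fun _ ⟨hE, hu⟩ => hE (hclosed.exists_mem_minSet_refCont hu)

/-- No element of `U` lies in the stable zone `E(Min_≺(U))`. -/
theorem eSet_minSet_inter_empty {n : ℕ} (hn : 1 ≤ n) (U : Set (Fin n → ℝ))
    (hU : U ⊆ {x | ∀ i, 0 ≤ x i}) (hclosed : IsClosed U) :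
    eSet (minSet U) ∩ U = ∅ :=
  eSet_minSet_inter_empty_general U hclosed
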